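/- arXiv:1811.03260 — 7 statements merged into one kernel-verified Lean document; each statement's English description precedes it below -/
import Mathlib

section
/- Let Ω > 0 be a real number, let Γ = [[0, −1/(iΩ)], [1/(iΩ), 0]] be a 2×2 complex matrix, and let G_p, B_p be arbitrary real numbers. Define the real matrix Y_p = [[−G_p, B_p], [B_p, G_p]]. Then Y_pΓ + (Y_pΓ)* = 0 (the 2×2 zero matrix), where * denotes conjugate transpose; consequently Re(v* (Y_pΓ) v) = 0 for every v ∈ ℂ². That is, the DEF passivity transformation renders the linearized constant power load lossless. -/
open Matrix Complex

set_option maxRecDepth 4000 in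
/-- The DEF passivity transformation renders the linearized
constant power load `Y_p = [[−G_p, B_p], [B_p, G_p]]` lossless:
`Y_pΓ + (Y_pΓ)* = 0`, hence `Re(v* (Y_pΓ) v) = 0` for every `v ∈ ℂ²`. -/
theorem stmt1 (Ω : ℝ) (hΩ : 0 < Ω) (Gp Bp : ℝ) :
    let Γ : Matrix (Fin 2) (Fin 2) ℂ :=
      !![0, -(1 / (Complex.I * Ω)); 1 / (Complex.I * Ω), 0]
    let Yp : Matrix (Fin 2) (Fin 2) ℂ := !![-(Gp : ℂ), (Bp : ℂ); (Bp : ℂ), (Gp : ℂ)]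
    Yp * Γ + (Yp * Γ)ᴴ = 0 ∧
      ∀ v : Fin 2 → ℂ, (star v ⬝ᵥ (Yp * Γ).mulVec v).re = 0 := by
  intro Γ Yp
  have hc : (starRingEnd ℂ) (1 / (Complex.I * Ω)) = -(1 / (Complex.I * Ω)) := by
    rw [map_div₀, _root_.map_one, _root_.map_mul, Complex.conj_I, Complex.conj_ofReal]
    ring
  have hzero : Yp * Γ + (Yp * Γ)ᴴ = 0 := by
    ext i j
    fin_cases i <;> fin_cases j <;>
      simp [Γ, Yp, Matrix.mul_apply, Matrix.conjTranspose_apply, Fin.sum_univ_two, hc]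
  refine ⟨hzero, fun v => ?_⟩
  have h2 : (Yp * Γ)ᴴ = -(Yp * Γ) := by
    rw [eq_neg_iff_add_eq_zero, add_comm]; exact hzero
  have h : star (star v ⬝ᵥ (Yp * Γ).mulVec v) = -(star v ⬝ᵥ (Yp * Γ).mulVec v) := by
    rw [← Matrix.star_dotProduct_star, star_star]
    rw [show star ((Yp * Γ).mulVec v) = star v ᵥ* (Yp * Γ)ᴴ from Matrix.star_mulVec _ _]
    rw [← Matrix.dotProduct_mulVec, h2, Matrix.neg_mulVec, dotProduct_neg]
  have h3 := congrArg Complex.re h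
  rw [Complex.star_def, Complex.conj_re, Complex.neg_re] at h3
  linarith
end

section
/- Let Ω > 0, let Γ = [[0, −1/(iΩ)], [1/(iΩ), 0]], let δ ∈ ℝ, let X ≠ 0 be real, and let γ ∈ ℂ. Define Y_g = γ·[[sin δ cos δ, −cos²δ], [sin²δ, −sin δ cos δ]] + [[0, 1/X], [−1/X, 0]]. Then the Hermitian part K_g = (1/2)(Y_gΓ + (Y_gΓ)*) equals (−Im(γ)/Ω)·[[cos²δ, sin δ cos δ], [sin δ cos δ, sin²δ]]. In particular, the skew-symmetric constant part [[0, 1/X], [−1/X, 0]] contributes nothing to K_g. -/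
/-!
Writing `J = !![0, 1; -1, 0]`, we have `Γ = (i/Ω) J`. The angle-dependent part of `Y_g` times
`J` is the real symmetric matrix `P = [[cos²δ, sin δ cos δ], [sin δ cos δ, sin²δ]]`, while
the constant part of `Y_g` is `(1/X) J` and `J² = -1`. So `Y_g Γ = (iγ/Ω) P - (i/(XΩ)) 1`,
and the Hermitian part of `z • H` with `H` Hermitian is `Re z • H`: the constant part
contributes a purely imaginary multiple of the identity, whose Hermitian part is zero.
-/

open Matrix Complex

theorem Matrix.IsHermitian.half_smul_smul_add_conjTranspose {n : Type*} {A : Matrix n n ℂ}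
    (hA : A.IsHermitian) (z : ℂ) :
    (1 / 2 : ℂ) • (z • A + (z • A)ᴴ) = (z.re : ℂ) • A := by
  rw [conjTranspose_smul, hA.eq, ← add_smul, smul_smul, star_def, add_conj]
  congr 1
  push_cast
  ring

theorem Matrix.half_smul_add_conjTranspose_add {n R : Type*} [Field R] [StarRing R]
    (A B : Matrix n n R) :
    (1 / 2 : R) • (A + B + (A + B)ᴴ) =
      (1 / 2 : R) • (A + Aᴴ) + (1 / 2 : R) • (B + Bᴴ) := by
  rw [conjTranspose_add, ← smul_add]
  abel_nf

def skewFinTwo (R : Type*) [Ring R] : Matrix (Fin 2) (Fin 2) R := !![0, 1; -1, 0]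

theorem smul_skewFinTwo {R : Type*} [Ring R] (a : R) : a • skewFinTwo R = !![0, a; -a, 0] := by
  simp [skewFinTwo, smul_of]

theorem skewFinTwo_mul_self (R : Type*) [Ring R] : skewFinTwo R * skewFinTwo R = -1 := by
  simp [skewFinTwo, one_fin_two]

theorem mul_skewFinTwo_of_sin_cos {R : Type*} [CommRing R] (s c : R) :
    !![s * c, -c ^ 2; s ^ 2, -(s * c)] * skewFinTwo R = !![c ^ 2, s * c; s * c, s ^ 2] := by
  simp [skewFinTwo]

theorem isHermitian_outer_fin_two (s c : ℝ) :
    (!![(c : ℂ) ^ 2, s * c; s * c, s ^ 2]).IsHermitian := by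
  ext i j; fin_cases i <;> fin_cases j <;> simp [← ofReal_pow, ← ofReal_mul]

theorem stmt2_general (Ω : ℝ) (δ X : ℝ) (γ : ℂ) :
    let Γ : Matrix (Fin 2) (Fin 2) ℂ :=
      !![0, -(1 / (Complex.I * Ω)); 1 / (Complex.I * Ω), 0]
    let Yg : Matrix (Fin 2) (Fin 2) ℂ :=
      γ • !![(Real.sin δ : ℂ) * (Real.cos δ : ℂ), -((Real.cos δ : ℂ) ^ 2);
             (Real.sin δ : ℂ) ^ 2, -((Real.sin δ : ℂ) * (Real.cos δ : ℂ))] +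
        !![0, 1 / (X : ℂ); -(1 / (X : ℂ)), 0]
    (1 / 2 : ℂ) • (Yg * Γ + (Yg * Γ)ᴴ) =
      ((-γ.im / Ω : ℝ) : ℂ) •
        !![(Real.cos δ : ℂ) ^ 2, (Real.sin δ : ℂ) * (Real.cos δ : ℂ);
           (Real.sin δ : ℂ) * (Real.cos δ : ℂ), (Real.sin δ : ℂ) ^ 2] := by
  intro Γ Yg
  have hΓ : Γ = (I / Ω) • skewFinTwo ℂ := by
    have hinv : 1 / (I * Ω) = -(I / Ω) := by
      rw [one_div, mul_inv, inv_I, neg_mul, div_eq_mul_inv]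
    rw [smul_skewFinTwo]
    simp only [Γ, hinv, neg_neg]
  have hYg : Yg = γ • !![(Real.sin δ : ℂ) * (Real.cos δ : ℂ), -((Real.cos δ : ℂ) ^ 2);
      (Real.sin δ : ℂ) ^ 2, -((Real.sin δ : ℂ) * (Real.cos δ : ℂ))] +
      (1 / (X : ℂ)) • skewFinTwo ℂ := by
    rw [smul_skewFinTwo]
  have hprod : Yg * Γ =
      (γ * (I / Ω)) • !![(Real.cos δ : ℂ) ^ 2, (Real.sin δ : ℂ) * (Real.cos δ : ℂ);
        (Real.sin δ : ℂ) * (Real.cos δ : ℂ), (Real.sin δ : ℂ) ^ 2] +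
      (1 / X * (I / Ω)) • (-1) := by
    rw [hYg, hΓ, add_mul, smul_mul_smul, smul_mul_smul, mul_skewFinTwo_of_sin_cos,
      skewFinTwo_mul_self]
  rw [hprod, half_smul_add_conjTranspose_add,
    (isHermitian_outer_fin_two _ _).half_smul_smul_add_conjTranspose,
    isHermitian_one.neg.half_smul_smul_add_conjTranspose]
  simp [div_eq_mul_inv, ← ofReal_inv]

/-- For the classical generator FRF `Y_g`, the Hermitian part
`K_g = (1/2)(Y_gΓ + (Y_gΓ)*)` equals
`(−Im γ / Ω) · [[cos²δ, sin δ cos δ], [sin δ cos δ, sin²δ]]`. -/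
theorem stmt2 (Ω : ℝ) (hΩ : 0 < Ω) (δ X : ℝ) (hX : X ≠ 0) (γ : ℂ) :
    let Γ : Matrix (Fin 2) (Fin 2) ℂ :=
      !![0, -(1 / (Complex.I * Ω)); 1 / (Complex.I * Ω), 0]
    let Yg : Matrix (Fin 2) (Fin 2) ℂ :=
      γ • !![(Real.sin δ : ℂ) * (Real.cos δ : ℂ), -((Real.cos δ : ℂ) ^ 2);
             (Real.sin δ : ℂ) ^ 2, -((Real.sin δ : ℂ) * (Real.cos δ : ℂ))] +
        !![0, 1 / (X : ℂ); -(1 / (X : ℂ)), 0]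
    (1 / 2 : ℂ) • (Yg * Γ + (Yg * Γ)ᴴ) =
      ((-γ.im / Ω : ℝ) : ℂ) •
        !![(Real.cos δ : ℂ) ^ 2, (Real.sin δ : ℂ) * (Real.cos δ : ℂ);
           (Real.sin δ : ℂ) * (Real.cos δ : ℂ), (Real.sin δ : ℂ) ^ 2] :=
  stmt2_general Ω δ X γ
end

section
/- Let Ω > 0, let Γ = [[0, −1/(iΩ)], [1/(iΩ), 0]], let δ ∈ ℝ, let X ≠ 0 be real, and let γ ∈ ℂ. Define Y_g = γ·[[sin δ cos δ, −cos²δ], [sin²δ, −sin δ cos δ]] + [[0, 1/X], [−1/X, 0]] and K_g = (1/2)(Y_gΓ + (Y_gΓ)*). Then the eigenvalues of the Hermitian matrix K_g are exactly {−Im(γ)/Ω, 0}. In particular, if Im(γ) < 0 then K_g is positive semidefinite but not positive definite. -/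
/-!
With `v = (cos δ, sin δ)`, the product `Y_g Γ` equals `(iγ/Ω) v vᴴ - (i/(ΩX)) 1`: the reactance
term becomes a purely imaginary multiple of the identity and drops out of the Hermitian part,
leaving `K_g = (-Im γ / Ω) v vᴴ`. This rank-one matrix has trace `-Im γ / Ω` and determinant `0`,
which gives its spectrum; for `Im γ < 0` it is a nonnegative multiple of `v vᴴ`, hence positive
semidefinite, and it is singular, hence not positive definite.
-/

open Matrix Complex ComplexOrder

namespace Matrix

theorem spectrum_fin_two_of_det_eq_zero {K : Type*} [Field K] (A : Matrix (Fin 2) (Fin 2) K)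
    (hA : A.det = 0) : spectrum K A = {A.trace, 0} := by
  ext μ
  rw [mem_spectrum_iff_isRoot_charpoly, charpoly_fin_two, hA]
  simp only [Polynomial.IsRoot, Polynomial.eval_sub, Polynomial.eval_pow,
    Polynomial.eval_mul, Polynomial.eval_C, Polynomial.eval_X, map_zero, add_zero,
    Set.mem_insert_iff, Set.mem_singleton_iff]
  rw [sq, ← sub_mul, mul_eq_zero, sub_eq_zero]

theorem not_posDef_of_det_eq_zero {n K : Type*} [Fintype n] [DecidableEq n] [Field K]
    [PartialOrder K] [StarRing K] {A : Matrix n n K} (hA : A.det = 0) : ¬A.PosDef := fun h =>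
  ((isUnit_iff_isUnit_det A).1 h.isUnit).ne_zero hA

variable {n : Type*}

noncomputable def hermitianPart (A : Matrix n n ℂ) : Matrix n n ℂ := (1 / 2 : ℂ) • (A + Aᴴ)

theorem hermitianPart_add (A B : Matrix n n ℂ) :
    hermitianPart (A + B) = hermitianPart A + hermitianPart B := by
  simp only [hermitianPart, conjTranspose_add, ← smul_add]
  abel_nf

theorem IsHermitian.hermitianPart_smul {M : Matrix n n ℂ} (hM : M.IsHermitian) (z : ℂ) :
    hermitianPart (z • M) = (z.re : ℂ) • M := by
  rw [hermitianPart, conjTranspose_smul, hM.eq, ← add_smul, smul_smul]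
  congr 1
  rw [star_def, add_conj]
  push_cast
  ring

end Matrix

noncomputable def defTransform (Ω : ℝ) : Matrix (Fin 2) (Fin 2) ℂ :=
  !![0, -(1 / (I * Ω)); 1 / (I * Ω), 0]

noncomputable def classicalGeneratorAdmittance (γ : ℂ) (δ X : ℝ) : Matrix (Fin 2) (Fin 2) ℂ :=
  γ • !![(Real.sin δ : ℂ) * (Real.cos δ : ℂ), -((Real.cos δ : ℂ) ^ 2);
         (Real.sin δ : ℂ) ^ 2, -((Real.sin δ : ℂ) * (Real.cos δ : ℂ))] +
    !![0, 1 / (X : ℂ); -(1 / (X : ℂ)), 0]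

noncomputable def rotorAxis (δ : ℝ) : Fin 2 → ℂ := ![(Real.cos δ : ℂ), (Real.sin δ : ℂ)]

theorem star_rotorAxis (δ : ℝ) : star (rotorAxis δ) = rotorAxis δ := by
  ext i; fin_cases i <;> exact conj_ofReal _

theorem rotorAxis_dotProduct_self (δ : ℝ) : rotorAxis δ ⬝ᵥ rotorAxis δ = 1 := by
  simp [rotorAxis, dotProduct, Fin.sum_univ_two, ← sq]

theorem classicalGeneratorAdmittance_mul_defTransform (γ : ℂ) (δ X Ω : ℝ) :
    classicalGeneratorAdmittance γ δ X * defTransform Ω =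
      (I * γ / Ω) • vecMulVec (rotorAxis δ) (star (rotorAxis δ)) +
        (-I / ((Ω * X : ℝ) : ℂ)) • 1 := by
  have hΓ : 1 / (I * Ω) = -I * (Ω : ℂ)⁻¹ := by
    rw [one_div, mul_inv, inv_I]
  rw [star_rotorAxis]
  ext i j
  fin_cases i <;> fin_cases j <;>
    simp [classicalGeneratorAdmittance, defTransform, rotorAxis, mul_apply, Fin.sum_univ_two,
      hΓ] <;>
    ring

theorem hermitianPart_classicalGeneratorAdmittance_mul_defTransform (γ : ℂ) (δ X Ω : ℝ) :
    hermitianPart (classicalGeneratorAdmittance γ δ X * defTransform Ω) =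
      ((-γ.im / Ω : ℝ) : ℂ) • vecMulVec (rotorAxis δ) (star (rotorAxis δ)) := by
  rw [classicalGeneratorAdmittance_mul_defTransform, hermitianPart_add,
    (posSemidef_vecMulVec_self_star _).isHermitian.hermitianPart_smul,
    isHermitian_one.hermitianPart_smul]
  simp only [div_ofReal_re, I_mul_re, neg_re, I_re, neg_zero, zero_div, ofReal_zero, zero_smul,
    add_zero]

theorem stmt3_general (Ω : ℝ) (hΩ : 0 < Ω) (δ X : ℝ) (γ : ℂ) :
    let Γ : Matrix (Fin 2) (Fin 2) ℂ :=
      !![0, -(1 / (Complex.I * Ω)); 1 / (Complex.I * Ω), 0]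
    let Yg : Matrix (Fin 2) (Fin 2) ℂ :=
      γ • !![(Real.sin δ : ℂ) * (Real.cos δ : ℂ), -((Real.cos δ : ℂ) ^ 2);
             (Real.sin δ : ℂ) ^ 2, -((Real.sin δ : ℂ) * (Real.cos δ : ℂ))] +
        !![0, 1 / (X : ℂ); -(1 / (X : ℂ)), 0]
    let Kg : Matrix (Fin 2) (Fin 2) ℂ := (1 / 2 : ℂ) • (Yg * Γ + (Yg * Γ)ᴴ)
    spectrum ℂ Kg = {((-γ.im / Ω : ℝ) : ℂ), 0} ∧
      (γ.im < 0 → Kg.PosSemidef ∧ ¬Kg.PosDef) := by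
  intro Γ Yg Kg
  set t : ℝ := -γ.im / Ω
  have hKg : Kg = (t : ℂ) • vecMulVec (rotorAxis δ) (star (rotorAxis δ)) :=
    hermitianPart_classicalGeneratorAdmittance_mul_defTransform γ δ X Ω
  have hdet : Kg.det = 0 := by rw [hKg, det_smul, det_vecMulVec, mul_zero]
  have htrace : Kg.trace = t := by
    rw [hKg, trace_smul, trace_vecMulVec, star_rotorAxis, rotorAxis_dotProduct_self, smul_eq_mul,
      mul_one]
  refine ⟨htrace ▸ spectrum_fin_two_of_det_eq_zero Kg hdet,
    fun hγ => ⟨?_, not_posDef_of_det_eq_zero hdet⟩⟩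
  have ht : 0 ≤ t := div_nonneg (neg_nonneg.2 hγ.le) hΩ.le
  rw [hKg]
  exact (posSemidef_vecMulVec_self_star _).smul (zero_le_real.2 ht)

/-- The eigenvalues of the Hermitian matrix
`K_g = (1/2)(Y_gΓ + (Y_gΓ)*)` are exactly `{−Im γ / Ω, 0}`; in particular if
`Im γ < 0` then `K_g` is positive semidefinite but not positive definite. -/
theorem stmt3 (Ω : ℝ) (hΩ : 0 < Ω) (δ X : ℝ) (hX : X ≠ 0) (γ : ℂ) :
    let Γ : Matrix (Fin 2) (Fin 2) ℂ :=
      !![0, -(1 / (Complex.I * Ω)); 1 / (Complex.I * Ω), 0]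
    let Yg : Matrix (Fin 2) (Fin 2) ℂ :=
      γ • !![(Real.sin δ : ℂ) * (Real.cos δ : ℂ), -((Real.cos δ : ℂ) ^ 2);
             (Real.sin δ : ℂ) ^ 2, -((Real.sin δ : ℂ) * (Real.cos δ : ℂ))] +
        !![0, 1 / (X : ℂ); -(1 / (X : ℂ)), 0]
    let Kg : Matrix (Fin 2) (Fin 2) ℂ := (1 / 2 : ℂ) • (Yg * Γ + (Yg * Γ)ᴴ)
    spectrum ℂ Kg = {((-γ.im / Ω : ℝ) : ℂ), 0} ∧
      (γ.im < 0 → Kg.PosSemidef ∧ ¬Kg.PosDef) :=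
  stmt3_general Ω hΩ δ X γ
end

section
/- Let Ω > 0, let Γ = [[0, −1/(iΩ)], [1/(iΩ), 0]], let δ ∈ ℝ, let M, D, E, X, V, φ be real with X ≠ 0, D > 0, and den = ((V·E/X)·cos φ − M·Ω²)² + (Ω·D)² > 0. Define γ = (E²/X²)·[ (−M·Ω² + (V·E/X)·cos φ) − i·(Ω·D) ] / den and Y_g = γ·[[sin δ cos δ, −cos²δ], [sin²δ, −sin δ cos δ]] + [[0, 1/X], [−1/X, 0]]. Then the Hermitian matrix Y_gΓ + (Y_gΓ)* is positive semidefinite, but it is not positive definite (it has 0 as an eigenvalue). That is, the DEF passivity transformation renders the positively damped classical generator passive but not strictly passive. -/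
open Matrix Complex ComplexOrder

/-!
The product is `Y_g Γ = -(γ / (iΩ)) • u uᵀ + (1 / (iΩX)) • 1` with `u = (cos δ, sin δ)`. The coefficient of the identity is purely imaginary, so it cancels in the
Hermitian part, which is `2 Re(-γ / (iΩ)) • u uᵀ = (2 E² D / (X² den)) • u uᵀ`: a nonnegative
multiple of a rank-one matrix, hence positive semidefinite and singular.
-/

theorem Matrix.smul_add_skew_mul_skew {R : Type*} [CommRing R] (g x w c s : R) :
    (g • !![s * c, -(c ^ 2); s ^ 2, -(s * c)] + !![0, x; -x, 0]) * !![0, -w; w, 0] =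
      (-(g * w)) • vecMulVec ![c, s] ![c, s] + (x * w) • 1 := by
  ext i j
  fin_cases i <;> fin_cases j <;> simp [Matrix.mul_apply] <;> ring

theorem Matrix.IsHermitian.smul_add_smul_one_add_conjTranspose {n : Type*} [Fintype n]
    [DecidableEq n] {P : Matrix n n ℂ} (hP : P.IsHermitian) (z y : ℂ) :
    z • P + y • 1 + (z • P + y • 1)ᴴ = (2 * z.re) • P + (2 * y.re) • (1 : Matrix n n ℂ) := by
  rw [conjTranspose_add, conjTranspose_smul, conjTranspose_smul, hP.eq, conjTranspose_one,
    add_add_add_comm, ← add_smul, ← add_smul, star_def, add_conj, add_conj, coe_smul, coe_smul]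

theorem Complex.one_div_I_mul_ofReal (r : ℝ) : 1 / (I * r) = -I * (r⁻¹ : ℝ) := by
  rw [one_div, mul_inv, inv_I, ofReal_inv]

theorem Complex.re_mul_one_div_I_mul_ofReal (z : ℂ) (r : ℝ) :
    (z * (1 / (I * r))).re = z.im / r := by
  rw [one_div_I_mul_ofReal, ← mul_assoc, re_mul_ofReal]
  simp [div_eq_mul_inv]

theorem Complex.re_neg_mul_one_div_I_mul_ofReal (c p D d r : ℝ) (hr : r ≠ 0) :
    (-((c : ℂ) * ((p : ℂ) - I * ((r * D : ℝ) : ℂ)) / d * (1 / (I * r)))).re = c * D / d := by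
  rw [neg_re, re_mul_one_div_I_mul_ofReal, div_ofReal_im, im_ofReal_mul, sub_im, ofReal_im,
    I_mul_im, ofReal_re, zero_sub]
  field_simp

theorem stmt5_general (Ω : ℝ) (hΩ : 0 < Ω) (δ M D E X V φ : ℝ) (hD : 0 < D) :
    let Γ : Matrix (Fin 2) (Fin 2) ℂ :=
      !![0, -(1 / (Complex.I * Ω)); 1 / (Complex.I * Ω), 0]
    let den : ℝ := ((V * E / X) * Real.cos φ - M * Ω ^ 2) ^ 2 + (Ω * D) ^ 2
    let γ : ℂ := ((E ^ 2 / X ^ 2 : ℝ) : ℂ) *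
      (((-(M * Ω ^ 2) + (V * E / X) * Real.cos φ : ℝ) : ℂ) -
        Complex.I * ((Ω * D : ℝ) : ℂ)) / ((den : ℝ) : ℂ)
    let Yg : Matrix (Fin 2) (Fin 2) ℂ :=
      γ • !![(Real.sin δ : ℂ) * (Real.cos δ : ℂ), -((Real.cos δ : ℂ) ^ 2);
             (Real.sin δ : ℂ) ^ 2, -((Real.sin δ : ℂ) * (Real.cos δ : ℂ))] +
        !![0, 1 / (X : ℂ); -(1 / (X : ℂ)), 0]
    (Yg * Γ + (Yg * Γ)ᴴ).PosSemidef ∧ ¬(Yg * Γ + (Yg * Γ)ᴴ).PosDef ∧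
      (0 : ℂ) ∈ spectrum ℂ (Yg * Γ + (Yg * Γ)ᴴ) := by
  intro Γ den γ Yg
  set u : Fin 2 → ℂ := ![(Real.cos δ : ℂ), (Real.sin δ : ℂ)]
  have hstar : star u = u := by
    ext i
    fin_cases i <;> simp [u, conj_ofReal, -ofReal_cos, -ofReal_sin]
  have hP : (vecMulVec u u).PosSemidef := by
    simpa only [hstar] using posSemidef_vecMulVec_self_star u
  have hH : Yg * Γ + (Yg * Γ)ᴴ = (2 * (E ^ 2 / X ^ 2 * D / den)) • vecMulVec u u := by
    rw [Matrix.smul_add_skew_mul_skew, hP.isHermitian.smul_add_smul_one_add_conjTranspose,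
      re_neg_mul_one_div_I_mul_ofReal _ _ _ _ _ hΩ.ne', re_mul_one_div_I_mul_ofReal]
    simp
  have hpsd : (Yg * Γ + (Yg * Γ)ᴴ).PosSemidef := by
    rw [hH]
    exact hP.smul (by positivity)
  have hsingular : ¬IsUnit (Yg * Γ + (Yg * Γ)ᴴ) := by
    rw [hH, ← smul_vecMulVec, isUnit_iff_isUnit_det, det_vecMulVec]
    exact not_isUnit_zero
  exact ⟨hpsd, fun hpd ↦ hsingular hpd.isUnit, (spectrum.zero_mem_iff ℂ).mpr hsingular⟩

/-- With positive damping `D > 0`, the DEF passivity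
transformation renders the classical generator passive but not strictly
passive: `Y_gΓ + (Y_gΓ)*` is positive semidefinite but not positive definite. -/
theorem stmt5 (Ω : ℝ) (hΩ : 0 < Ω) (δ M D E X V φ : ℝ) (hX : X ≠ 0) (hD : 0 < D)
    (hden : 0 < ((V * E / X) * Real.cos φ - M * Ω ^ 2) ^ 2 + (Ω * D) ^ 2) :
    let Γ : Matrix (Fin 2) (Fin 2) ℂ :=
      !![0, -(1 / (Complex.I * Ω)); 1 / (Complex.I * Ω), 0]
    let den : ℝ := ((V * E / X) * Real.cos φ - M * Ω ^ 2) ^ 2 + (Ω * D) ^ 2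
    let γ : ℂ := ((E ^ 2 / X ^ 2 : ℝ) : ℂ) *
      (((-(M * Ω ^ 2) + (V * E / X) * Real.cos φ : ℝ) : ℂ) -
        Complex.I * ((Ω * D : ℝ) : ℂ)) / ((den : ℝ) : ℂ)
    let Yg : Matrix (Fin 2) (Fin 2) ℂ :=
      γ • !![(Real.sin δ : ℂ) * (Real.cos δ : ℂ), -((Real.cos δ : ℂ) ^ 2);
             (Real.sin δ : ℂ) ^ 2, -((Real.sin δ : ℂ) * (Real.cos δ : ℂ))] +
        !![0, 1 / (X : ℂ); -(1 / (X : ℂ)), 0]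
    (Yg * Γ + (Yg * Γ)ᴴ).PosSemidef ∧ ¬(Yg * Γ + (Yg * Γ)ᴴ).PosDef ∧
      (0 : ℂ) ∈ spectrum ℂ (Yg * Γ + (Yg * Γ)ᴴ) :=
  stmt5_general Ω hΩ δ M D E X V φ hD
end

section
/- Let Ω > 0, let Γ = [[0, −1/(iΩ)], [1/(iΩ), 0]], and let G, B be real numbers. Define Y_z = [[G, −B], [B, G]] and K_z = (1/2)(Y_zΓ + (Y_zΓ)*). Then the eigenvalues of the Hermitian matrix K_z are exactly {G/Ω, −G/Ω}. In particular, if G ≠ 0, then K_z is indefinite: there exist vectors v, w ∈ ℂ² with v* K_z v > 0 and w* K_z w < 0, so the dissipating power Re(u* (Y_zΓ) u) takes both positive and negative values as u ranges over ℂ². -/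
open Matrix Complex

/-- For a constant impedance load `Y_z = [[G, −B], [B, G]]`, the
eigenvalues of `K_z = (1/2)(Y_zΓ + (Y_zΓ)*)` are exactly `{G/Ω, −G/Ω}`; if
`G ≠ 0` then `K_z` is indefinite and the dissipating power
`Re(u* (Y_zΓ) u)` takes both positive and negative values. -/
theorem stmt6 (Ω : ℝ) (hΩ : 0 < Ω) (G B : ℝ) :
    let Γ : Matrix (Fin 2) (Fin 2) ℂ :=
      !![0, -(1 / (Complex.I * Ω)); 1 / (Complex.I * Ω), 0]
    let Yz : Matrix (Fin 2) (Fin 2) ℂ := !![(G : ℂ), -(B : ℂ); (B : ℂ), (G : ℂ)]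
    let Kz : Matrix (Fin 2) (Fin 2) ℂ := (1 / 2 : ℂ) • (Yz * Γ + (Yz * Γ)ᴴ)
    spectrum ℂ Kz = {((G / Ω : ℝ) : ℂ), ((-(G / Ω) : ℝ) : ℂ)} ∧
      (G ≠ 0 →
        (∃ v : Fin 2 → ℂ, 0 < (star v ⬝ᵥ Kz.mulVec v).re) ∧
        (∃ w : Fin 2 → ℂ, (star w ⬝ᵥ Kz.mulVec w).re < 0) ∧
        (∃ u : Fin 2 → ℂ, 0 < (star u ⬝ᵥ (Yz * Γ).mulVec u).re) ∧
        (∃ u : Fin 2 → ℂ, (star u ⬝ᵥ (Yz * Γ).mulVec u).re < 0)) := by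
  intro Γ Yz Kz
  have hΩ' : (Ω : ℂ) ≠ 0 := by exact_mod_cast hΩ.ne'
  set g : ℝ := G / Ω with hg
  -- Identify Kz explicitly
  have hK : Kz = !![0, (g:ℂ) * Complex.I; -((g:ℂ) * Complex.I), 0] := by
    ext i j
    fin_cases i <;> fin_cases j <;>
      simp [Kz, Γ, Yz, Matrix.mul_apply, Fin.sum_univ_two, Complex.ext_iff, hg,
        div_eq_iff, hΩ'] <;>
      field_simp <;> ring
  constructor
  · -- spectrum
    rw [hK]
    ext μ
    rw [spectrum.mem_iff, Matrix.isUnit_iff_isUnit_det, isUnit_iff_ne_zero, not_not]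
    have h1 : ((algebraMap ℂ (Matrix (Fin 2) (Fin 2) ℂ)) μ)
          - !![0, (g:ℂ) * Complex.I; -((g:ℂ) * Complex.I), 0]
        = !![μ, -((g:ℂ) * Complex.I); (g:ℂ) * Complex.I, μ] := by
      rw [Matrix.algebraMap_eq_diagonal]
      ext i j
      fin_cases i <;> fin_cases j <;> simp [Matrix.diagonal]
    have h2 : (!![μ, -((g:ℂ) * Complex.I); (g:ℂ) * Complex.I, μ]).det
        = (μ - g) * (μ + g) := by
      rw [Matrix.det_fin_two_of]
      ring_nf
      simp [Complex.I_sq]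
      ring
    rw [h1, h2, mul_eq_zero, sub_eq_zero]
    simp [eq_comm, add_eq_zero_iff_eq_neg]
  · intro hG
    have keyK : ∀ s : ℝ,
        (star ![1, s * Complex.I] ⬝ᵥ Kz.mulVec ![1, s * Complex.I]).re = -2 * s * G / Ω := by
      intro s
      rw [hK]
      simp [Matrix.mulVec, dotProduct, Fin.sum_univ_two, hg]
      field_simp
      ring
    have keyM : ∀ s : ℝ,
        (star ![1, s * Complex.I] ⬝ᵥ (Yz * Γ).mulVec ![1, s * Complex.I]).re
          = -2 * s * G / Ω := by
      intro s
      simp [Γ, Yz, Matrix.mulVec, Matrix.mul_apply, dotProduct, Fin.sum_univ_two,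
        div_eq_iff, hΩ']
      field_simp
      ring
    have hpos : ∀ s : ℝ, s * G < 0 → 0 < -2 * s * G / Ω := by
      intro s hs
      rw [div_pos_iff]; left; constructor <;> nlinarith
    have hneg : ∀ s : ℝ, 0 < s * G → -2 * s * G / Ω < 0 := by
      intro s hs
      rw [div_neg_iff]; right; constructor <;> nlinarith
    rcases hG.lt_or_gt with h | h
    · refine ⟨⟨![1, (1:ℝ) * Complex.I], ?_⟩, ⟨![1, (-1:ℝ) * Complex.I], ?_⟩,
        ⟨![1, (1:ℝ) * Complex.I], ?_⟩, ⟨![1, (-1:ℝ) * Complex.I], ?_⟩⟩ <;>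
        simp only [keyK, keyM]
      · exact hpos 1 (by nlinarith)
      · exact hneg (-1) (by nlinarith)
      · exact hpos 1 (by nlinarith)
      · exact hneg (-1) (by nlinarith)
    · refine ⟨⟨![1, (-1:ℝ) * Complex.I], ?_⟩, ⟨![1, (1:ℝ) * Complex.I], ?_⟩,
        ⟨![1, (-1:ℝ) * Complex.I], ?_⟩, ⟨![1, (1:ℝ) * Complex.I], ?_⟩⟩ <;>
        simp only [keyK, keyM]
      · exact hpos (-1) (by nlinarith)
      · exact hneg 1 (by nlinarith)
      · exact hpos (-1) (by nlinarith)
      · exact hneg 1 (by nlinarith)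
end

section
/- Let Ω > 0, G ∈ ℝ, a ≥ 0, b ≥ 0, and θ_r, θ_i ∈ ℝ. Let B ∈ ℝ be arbitrary and set Y_z = [[G, −B], [B, G]] and Γ = [[0, −1/(iΩ)], [1/(iΩ), 0]]. Define the complex vector u = (iΩ·b·e^{iθ_i}, −iΩ·a·e^{iθ_r}) ∈ ℂ². Then the dissipating power satisfies Re( u* (Y_zΓ) u ) = 2·G·Ω·a·b·sin(θ_r − θ_i). In particular, the result is independent of the susceptance B, and its sign equals the sign of G·sin(θ_r − θ_i). -/
open Matrix Complex

/-!
Both `Y_z = G + B·J` and `Γ = J / (iΩ)` are rotation-scalings, with `J` the quarter turn, so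
`Y_z Γ = (G·J − B) / (iΩ)`. The `B`-part contributes `−B‖u‖² / (iΩ)`, which is purely imaginary,
while `u* J u = 2i·Im(ū₁ u₀)`; hence the dissipating power is `(2G/Ω)·Im(ū₁ u₀)`, and for the
given phasors `ū₁ u₀ = −Ω² a b e^{i(θ_i − θ_r)}`.
-/

section RotationScaling

variable (p q : ℝ)

lemma rotationScaling_mul_antidiag (c : ℂ) :
    !![(p : ℂ), -(q : ℂ); (q : ℂ), (p : ℂ)] * !![0, -c; c, 0]
      = c • !![((-q : ℝ) : ℂ), -(p : ℂ); (p : ℂ), ((-q : ℝ) : ℂ)] := by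
  ext i j
  fin_cases i <;> fin_cases j <;> simp [Matrix.mul_apply] <;> ring

lemma star_dotProduct_rotationScaling_mulVec (v : Fin 2 → ℂ) :
    star v ⬝ᵥ !![(p : ℂ), -(q : ℂ); (q : ℂ), (p : ℂ)] *ᵥ v
      = ((p * (normSq (v 0) + normSq (v 1)) : ℝ) : ℂ)
        + ((2 * q * (star (v 1) * v 0).im : ℝ) : ℂ) * I := by
  apply Complex.ext <;>
    simp [dotProduct, mulVec, Fin.sum_univ_two, normSq_apply] <;> ring

end RotationScaling

lemma re_one_div_I_mul_mul (Ω x y : ℝ) :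
    (1 / (I * Ω) * ((x : ℂ) + (y : ℂ) * I)).re = y / Ω := by
  rw [one_div, mul_inv, inv_I, ← ofReal_inv]
  simp
  ring

lemma im_star_mul_phasors (Ω a b θr θi : ℝ) :
    (star (-(I * Ω * a * exp (I * θr))) * (I * Ω * b * exp (I * θi))).im
      = Ω ^ 2 * a * b * Real.sin (θr - θi) := by
  rw [mul_comm I (θi : ℂ), mul_comm I (θr : ℂ), exp_mul_I, exp_mul_I]
  simp [← ofReal_cos, ← ofReal_sin, Real.sin_sub]
  ring

theorem stmt8_general (Ω : ℝ) (G : ℝ) (a b : ℝ)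
    (θr θi : ℝ) (B : ℝ) :
    let Γ : Matrix (Fin 2) (Fin 2) ℂ :=
      !![0, -(1 / (Complex.I * Ω)); 1 / (Complex.I * Ω), 0]
    let Yz : Matrix (Fin 2) (Fin 2) ℂ := !![(G : ℂ), -(B : ℂ); (B : ℂ), (G : ℂ)]
    let u : Fin 2 → ℂ :=
      ![Complex.I * Ω * b * Complex.exp (Complex.I * θi),
        -(Complex.I * Ω * a * Complex.exp (Complex.I * θr))]
    (star u ⬝ᵥ (Yz * Γ).mulVec u).re = 2 * G * Ω * a * b * Real.sin (θr - θi) := by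
  intro Γ Yz u
  rw [rotationScaling_mul_antidiag, smul_mulVec, dotProduct_smul, smul_eq_mul,
    star_dotProduct_rotationScaling_mulVec, re_one_div_I_mul_mul]
  have hu : (star (u 1) * u 0).im = Ω ^ 2 * a * b * Real.sin (θr - θi) :=
    im_star_mul_phasors Ω a b θr θi
  rw [hu, pow_two]
  calc 2 * G * (Ω * Ω * a * b * Real.sin (θr - θi)) / Ω
      = 2 * G * (Ω * Ω / Ω) * a * b * Real.sin (θr - θi) := by ring
    _ = 2 * G * Ω * a * b * Real.sin (θr - θi) := by rw [mul_self_div_self]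

/-- With voltage perturbation phasors `Ṽ_r = a·e^{iθ_r}`,
`Ṽ_i = b·e^{iθ_i}` and DEF-transformed input
`u = (iΩ·b·e^{iθ_i}, −iΩ·a·e^{iθ_r})`, the dissipating power of the constant
impedance load is `Re(u* (Y_zΓ) u) = 2·G·Ω·a·b·sin(θ_r − θ_i)`,
independently of the susceptance `B`. -/
theorem stmt8 (Ω : ℝ) (hΩ : 0 < Ω) (G : ℝ) (a b : ℝ) (ha : 0 ≤ a) (hb : 0 ≤ b)
    (θr θi : ℝ) (B : ℝ) :
    let Γ : Matrix (Fin 2) (Fin 2) ℂ :=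
      !![0, -(1 / (Complex.I * Ω)); 1 / (Complex.I * Ω), 0]
    let Yz : Matrix (Fin 2) (Fin 2) ℂ := !![(G : ℂ), -(B : ℂ); (B : ℂ), (G : ℂ)]
    let u : Fin 2 → ℂ :=
      ![Complex.I * Ω * b * Complex.exp (Complex.I * θi),
        -(Complex.I * Ω * a * Complex.exp (Complex.I * θr))]
    (star u ⬝ᵥ (Yz * Γ).mulVec u).re = 2 * G * Ω * a * b * Real.sin (θr - θi) :=
  stmt8_general Ω G a b θr θi B
end

section
/- Let P, Q be fixed real numbers and define f : ℝ² → ℝ² on the set {(V_r, V_i) : V_r² + V_i² ≠ 0} by f(V_r, V_i) = ( (P·V_r + Q·V_i)/(V_r² + V_i²), (P·V_i − Q·V_r)/(V_r² + V_i²) ). Fix a point (V_r, V_i) with V_r² + V_i² ≠ 0 and let (I_r, I_i) = f(V_r, V_i). Then f is differentiable at (V_r, V_i) and its Jacobian (Fréchet derivative) at that point is the linear map given by the matrix [[−G_p, B_p], [B_p, G_p]], where G_p = (V_r·I_r − V_i·I_i)/(V_r² + V_i²) and B_p = (−V_i·I_r − I_i·V_r)/(V_r² + V_i²). -/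
/-!
Writing `d(v) = v₀² + v₁²` and `N = [[P, Q], [-Q, P]]` (the matrix of complex multiplication
by `P - iQ`), the load current is `f(v) = d(v)⁻¹ • N v`. The quotient rule gives the Jacobian
`d⁻¹ N - d⁻² (N x) (2 x)ᵀ` at `x`, and substituting `(I_r, I_i) = d⁻¹ N x` turns its
entries into `∓G_p` and `B_p`.
-/

theorem HasFDerivAt.inv_smul {𝕜 E F : Type*} [NontriviallyNormedField 𝕜]
    [NormedAddCommGroup E] [NormedSpace 𝕜 E] [NormedAddCommGroup F] [NormedSpace 𝕜 F]
    {c : E → 𝕜} {c' : E →L[𝕜] 𝕜} {f : E → F} {f' : E →L[𝕜] F} {x : E}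
    (hc : HasFDerivAt c c' x) (hf : HasFDerivAt f f' x) (hx : c x ≠ 0) :
    HasFDerivAt (fun y => (c y)⁻¹ • f y)
      ((c x)⁻¹ • f' - (c x ^ 2)⁻¹ • c'.smulRight (f x)) x := by
  refine (((hasFDerivAt_inv hx).comp x hc).smul hf).congr_fderiv ?_
  ext v
  simp [sub_eq_add_neg, mul_comm, mul_smul]

theorem hasFDerivAt_sum_sq {ι : Type*} [Fintype ι] (x : ι → ℝ) :
    HasFDerivAt (fun v : ι → ℝ => ∑ i, v i ^ 2)
      (∑ i, (2 * x i) • (ContinuousLinearMap.proj i : (ι → ℝ) →L[ℝ] ℝ)) x :=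
  (HasFDerivAt.fun_sum fun i _ => (hasFDerivAt_apply i x).pow 2).congr_fderiv (by simp)

/-- The constant power load current map
`f(V_r, V_i) = ((P V_r + Q V_i)/(V_r² + V_i²), (P V_i − Q V_r)/(V_r² + V_i²))`
is differentiable at any point with `V_r² + V_i² ≠ 0`, with Jacobian
`[[−G_p, B_p], [B_p, G_p]]` where `G_p = (V_r I_r − V_i I_i)/(V_r² + V_i²)` and
`B_p = (−V_i I_r − I_i V_r)/(V_r² + V_i²)`. -/
theorem stmt9 (P Q Vr Vi : ℝ) (h : Vr ^ 2 + Vi ^ 2 ≠ 0) :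
    let Ir : ℝ := (P * Vr + Q * Vi) / (Vr ^ 2 + Vi ^ 2)
    let Ii : ℝ := (P * Vi - Q * Vr) / (Vr ^ 2 + Vi ^ 2)
    let Gp : ℝ := (Vr * Ir - Vi * Ii) / (Vr ^ 2 + Vi ^ 2)
    let Bp : ℝ := (-(Vi * Ir) - Ii * Vr) / (Vr ^ 2 + Vi ^ 2)
    HasFDerivAt
      (fun v : Fin 2 → ℝ =>
        ![(P * v 0 + Q * v 1) / (v 0 ^ 2 + v 1 ^ 2),
          (P * v 1 - Q * v 0) / (v 0 ^ 2 + v 1 ^ 2)])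
      (LinearMap.toContinuousLinearMap (Matrix.mulVecLin !![-Gp, Bp; Bp, Gp]))
      ![Vr, Vi] := by
  intro Ir Ii Gp Bp
  set N : Matrix (Fin 2) (Fin 2) ℝ := !![P, Q; -Q, P]
  have hf_eq : (fun v : Fin 2 → ℝ =>
        ![(P * v 0 + Q * v 1) / (v 0 ^ 2 + v 1 ^ 2),
          (P * v 1 - Q * v 0) / (v 0 ^ 2 + v 1 ^ 2)]) =
      fun v => (∑ i, v i ^ 2)⁻¹ • N.mulVec v := by
    funext v; ext i
    fin_cases i <;>
      simp [N, Fin.sum_univ_two, div_eq_inv_mul, neg_add_eq_sub, Matrix.vecHead, Matrix.vecTail]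
  rw [hf_eq]
  refine ((hasFDerivAt_sum_sq _).inv_smul (LinearMap.toContinuousLinearMap N.mulVecLin).hasFDerivAt
    (by simpa [Fin.sum_univ_two] using h)).congr_fderiv ?_
  ext v i
  fin_cases i <;>
    simp [N, Gp, Bp, Ir, Ii, Fin.sum_univ_two, Matrix.vecHead, Matrix.vecTail] <;>
    field_simp <;> ring
end
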